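/- If the Pierce–Birkhoff conjecture holds in every dimension, then every matrix-valued spline is a ReLU encoder: for every spline f : ℝ^{n×p} → ℝ^{r×p} of degree k there exist a finite t ∈ ℕ, multihead ReLU attention modules α_1,…,α_t, and one-layer ReLU feed-forward neural networks φ_1,…,φ_t (applied columnwise) such that f = φ_t ∘ α_t ∘ ⋯ ∘ φ_1 ∘ α_1. -/
import Mathlib


noncomputable section

open Matrix

/-- The rectified linear unit. -/
def relu (x : ℝ) : ℝ := max x 0

/-- Entrywise ReLU of a matrix. -/
def matRelu {a b : ℕ} (M : Matrix (Fin a) (Fin b) ℝ) : Matrix (Fin a) (Fin b) ℝ :=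
  Matrix.of fun i j => relu (M i j)

/-- A continuous function `f : ℝ^ι → ℝ` is a (polynomial) spline of degree `k` if there are
polynomials `π_1, …, π_b`, each of total degree at most `k`, such that on every (nonempty) cell
of the induced semialgebraic sign partition, `f` agrees with a polynomial of degree at most `k`. -/
def IsSpline (ι : Type) [Fintype ι] (k : ℕ) (f : (ι → ℝ) → ℝ) : Prop :=
  Continuous f ∧
  ∃ (b : ℕ) (π : Fin b → MvPolynomial ι ℝ),
    (∀ i, (π i).totalDegree ≤ k) ∧
    ∀ θ : Fin b → SignType,
      ∃ ξ : MvPolynomial ι ℝ, ξ.totalDegree ≤ k ∧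
        ∀ x : ι → ℝ, (∀ i, SignType.sign (MvPolynomial.eval x (π i)) = θ i) →
          f x = MvPolynomial.eval x ξ

/-- A matrix-variate, matrix-valued function is a spline of degree `k` if each coordinate
function, regarded as a function of the entries of the input matrix, is a spline of degree `k`. -/
def IsMatrixSpline {n p m q : ℕ} (k : ℕ)
    (f : Matrix (Fin n) (Fin p) ℝ → Matrix (Fin m) (Fin q) ℝ) : Prop :=
  ∀ (i : Fin m) (j : Fin q),
    IsSpline (Fin n × Fin p) k (fun x => f (Matrix.of fun a b => x (a, b)) i j)

/-- The ReLU-activated attention module `α(X) = (A_V X + B_V) · ReLU((A_K X + B_K)ᵀ (A_Q X + B_Q))`. -/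
def attention {n p d m : ℕ}
    (AQ AK : Matrix (Fin d) (Fin n) ℝ) (AV : Matrix (Fin m) (Fin n) ℝ)
    (BQ BK : Matrix (Fin d) (Fin p) ℝ) (BV : Matrix (Fin m) (Fin p) ℝ)
    (X : Matrix (Fin n) (Fin p) ℝ) : Matrix (Fin m) (Fin p) ℝ :=
  (AV * X + BV) * matRelu ((AK * X + BK)ᵀ * (AQ * X + BQ))

/-- The Pierce–Birkhoff conjecture (in every dimension): every spline `f : ℝ^N → ℝ` is a finite
max of finite mins of polynomials. -/
def PierceBirkhoff : Prop :=
  ∀ (N : ℕ) (f : (Fin N → ℝ) → ℝ), (∃ k, IsSpline (Fin N) k f) →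
    ∃ (m q : ℕ) (ξ : Fin (m + 1) → Fin (q + 1) → MvPolynomial (Fin N) ℝ),
      ∀ x, f x = ⨆ i, ⨅ j, MvPolynomial.eval x (ξ i j)

/-- An `h`-headed ReLU attention module: `h` attention modules stacked vertically, giving a map
`ℝ^{n×p} → ℝ^{hm×p}`. -/
def multiheadAttention {n p d m h : ℕ}
    (AQ AK : Fin h → Matrix (Fin d) (Fin n) ℝ) (AV : Fin h → Matrix (Fin m) (Fin n) ℝ)
    (BQ BK : Fin h → Matrix (Fin d) (Fin p) ℝ) (BV : Fin h → Matrix (Fin m) (Fin p) ℝ)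
    (X : Matrix (Fin n) (Fin p) ℝ) : Matrix (Fin (h * m)) (Fin p) ℝ :=
  Matrix.of fun i j =>
    attention (AQ (finProdFinEquiv.symm i).1) (AK (finProdFinEquiv.symm i).1)
      (AV (finProdFinEquiv.symm i).1) (BQ (finProdFinEquiv.symm i).1)
      (BK (finProdFinEquiv.symm i).1) (BV (finProdFinEquiv.symm i).1) X
      (finProdFinEquiv.symm i).2 j

/-- A one-layer ReLU feed-forward neural network `φ(x) = A₂ ReLU(A₁ x + b₁) + b₂`. -/
def oneLayerNN {a b c : ℕ} (A1 : Matrix (Fin b) (Fin a) ℝ) (b1 : Fin b → ℝ)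
    (A2 : Matrix (Fin c) (Fin b) ℝ) (b2 : Fin c → ℝ) (x : Fin a → ℝ) : Fin c → ℝ :=
  A2.mulVec (fun i => relu (A1.mulVec x i + b1 i)) + b2

/-- Apply a map `φ : ℝ^a → ℝ^c` columnwise to a matrix `X ∈ ℝ^{a×p}`. -/
def colwise {a c p : ℕ} (φ : (Fin a → ℝ) → (Fin c → ℝ))
    (X : Matrix (Fin a) (Fin p) ℝ) : Matrix (Fin c) (Fin p) ℝ :=
  Matrix.of fun i j => φ (fun r => X r j) i

/-- An encoder block with one-layer feed-forward network: a multihead ReLU attention module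
followed by a one-layer ReLU neural network applied columnwise. -/
def IsEncoderBlock1 {n r p : ℕ}
    (f : Matrix (Fin n) (Fin p) ℝ → Matrix (Fin r) (Fin p) ℝ) : Prop :=
  ∃ (d m h w : ℕ)
    (AQ AK : Fin h → Matrix (Fin d) (Fin n) ℝ) (AV : Fin h → Matrix (Fin m) (Fin n) ℝ)
    (BQ BK : Fin h → Matrix (Fin d) (Fin p) ℝ) (BV : Fin h → Matrix (Fin m) (Fin p) ℝ)
    (A1 : Matrix (Fin w) (Fin (h * m)) ℝ) (c1 : Fin w → ℝ)
    (A2 : Matrix (Fin r) (Fin w) ℝ) (c2 : Fin r → ℝ),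
    f = fun X => colwise (oneLayerNN A1 c1 A2 c2) (multiheadAttention AQ AK AV BQ BK BV X)

/-- A `t`-layer encoder built of one-layer networks: the composition of `t` encoder blocks
`φ_t ∘ α_t ∘ ⋯ ∘ φ_1 ∘ α_1`. -/
inductive IsEncoder1 {p : ℕ} : ∀ {n r : ℕ}, ℕ →
    (Matrix (Fin n) (Fin p) ℝ → Matrix (Fin r) (Fin p) ℝ) → Prop
  | block {n r : ℕ} (f : Matrix (Fin n) (Fin p) ℝ → Matrix (Fin r) (Fin p) ℝ)
      (hf : IsEncoderBlock1 f) : IsEncoder1 1 f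
  | comp {n s r : ℕ} (t : ℕ) (f : Matrix (Fin n) (Fin p) ℝ → Matrix (Fin s) (Fin p) ℝ)
      (g : Matrix (Fin s) (Fin p) ℝ → Matrix (Fin r) (Fin p) ℝ)
      (hf : IsEncoderBlock1 f) (hg : IsEncoder1 t g) : IsEncoder1 (t + 1) (g ∘ f)

@[simp] lemma relu_zero : relu 0 = 0 := by simp [relu]
@[simp] lemma relu_one : relu 1 = 1 := by simp [relu]
lemma relu_sub_relu_neg (x : ℝ) : relu x - relu (-x) = x := by
  rcases le_total x 0 with h | h
  · simp [relu, max_eq_right h, max_eq_left (neg_nonneg.2 h)]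
  · simp [relu, max_eq_left h, max_eq_right (neg_nonpos.2 h)]

lemma max_eq_add_relu (a b : ℝ) : max a b = b + relu (a - b) := by
  rcases le_total a b with h | h
  · simp [relu, max_eq_right h, max_eq_right (sub_nonpos.2 h)]
  · simp [relu, max_eq_left h, max_eq_left (sub_nonneg.2 h)]

lemma isEncoderBlock_master {n r p : ℕ} (d m h : ℕ)
    (AQ AK : Fin h → Matrix (Fin d) (Fin n) ℝ) (AV : Fin h → Matrix (Fin m) (Fin n) ℝ)
    (BQ BK : Fin h → Matrix (Fin d) (Fin p) ℝ) (BV : Fin h → Matrix (Fin m) (Fin p) ℝ)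
    (C : Matrix (Fin r) (Fin (h * m)) ℝ) (c2 : Fin r → ℝ) (ρ : Fin r → Bool) :
    IsEncoderBlock1 (fun X => Matrix.of fun c j =>
      if ρ c then relu ((∑ I, C c I * multiheadAttention AQ AK AV BQ BK BV X I j) + c2 c)
      else (∑ I, C c I * multiheadAttention AQ AK AV BQ BK BV X I j) + c2 c) := by
  refine ⟨d, m, h, r + r, AQ, AK, AV, BQ, BK, BV,
    Matrix.of (Fin.addCases (fun i1 => C i1) (fun i1 => -C i1)),
    Fin.addCases (fun i1 => if ρ i1 then c2 i1 else 0) (fun _ => 0),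
    (Matrix.of (fun c i => Fin.addCases (fun i1 => if i1 = c then (1:ℝ) else 0)
      (fun i1 => if i1 = c then (if ρ c then 0 else (-1:ℝ)) else 0) i)),
    fun c => if ρ c then 0 else c2 c, ?_⟩
  funext X
  ext c j
  simp only [colwise, oneLayerNN, Matrix.mulVec, dotProduct, Matrix.of_apply, Pi.add_apply]
  rw [Fin.sum_univ_add]
  simp only [Fin.addCases_left, Fin.addCases_right, Pi.neg_apply, neg_mul,
    Finset.sum_neg_distrib, ite_mul, one_mul, zero_mul, Finset.sum_ite_eq', Finset.mem_univ,
    if_true, add_zero]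
  set S := ∑ I, C c I * multiheadAttention AQ AK AV BQ BK BV X I j with hS
  by_cases hc : ρ c
  · simp [hc, hS]
  · simp only [hc, if_false, Bool.false_eq_true, add_zero]
    have := relu_sub_relu_neg S
    linarith

@[simp] lemma matRelu_one {p : ℕ} : matRelu (1 : Matrix (Fin p) (Fin p) ℝ) = 1 := by
  ext i j; by_cases h : i = j <;> simp [matRelu, Matrix.one_apply, h]

/-- `(s+1) × s` embedding matrix. -/
def embedAV (s : ℕ) : Matrix (Fin (s+1)) (Fin s) ℝ :=
  Matrix.of fun i a => if i = a.castSucc then 1 else 0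

lemma embed_mul_apply {s p : ℕ} (Y : Matrix (Fin s) (Fin p) ℝ) (i : Fin (s+1)) (j : Fin p) :
    (embedAV s * Y) i j = Fin.lastCases 0 (fun i' => Y i' j) i := by
  induction i using Fin.lastCases with
  | last =>
      rw [Fin.lastCases_last]
      rw [Matrix.mul_apply]
      apply Finset.sum_eq_zero
      intro a _
      simp [embedAV, (Fin.castSucc_lt_last a).ne']
  | cast i' =>
      rw [Fin.lastCases_castSucc, Matrix.mul_apply]
      simp [embedAV, Fin.castSucc_inj]

/-- `p × q` matrix with a single `1` at position `(0, l)`. -/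
def selVec (p : ℕ) {q : ℕ} [NeZero p] (l : Fin q) : Matrix (Fin p) (Fin q) ℝ :=
  Matrix.of fun rr a => if rr = 0 ∧ a = l then 1 else 0

/-- `p × p` matrix whose row `0` is all ones. -/
def bqMat (p : ℕ) [NeZero p] : Matrix (Fin p) (Fin p) ℝ :=
  Matrix.of fun rr _ => if rr = 0 then 1 else 0

def lastSel (s p : ℕ) [NeZero p] : Matrix (Fin (s+1)) (Fin p) ℝ :=
  Matrix.of fun i a => if i = Fin.last s ∧ a = 0 then 1 else 0

variable {s p : ℕ} [NeZero p]

lemma att_id (Y : Matrix (Fin s) (Fin p) ℝ) :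
    attention 0 0 (embedAV s) (1 : Matrix (Fin p) (Fin p) ℝ) 1 0 Y = embedAV s * Y := by
  simp [attention]

lemma att_bcast (Y : Matrix (Fin s) (Fin p) ℝ) :
    attention 0 0 (embedAV s) (bqMat p) (selVec p (0 : Fin p)) 0 Y
      = Matrix.of fun i _ => Fin.lastCases 0 (fun i' => Y i' 0) i := by
  have hP : (selVec p (0 : Fin p))ᵀ * bqMat p
      = Matrix.of fun (a j : Fin p) => if a = 0 then 1 else 0 := by
    ext a j
    rw [Matrix.mul_apply]
    simp only [transpose_apply, selVec, bqMat, Matrix.of_apply, ite_mul, one_mul, zero_mul]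
    rw [Finset.sum_congr rfl (fun rr _ => by
      rw [show (if rr = 0 ∧ a = 0 then (if rr = 0 then (1:ℝ) else 0) else 0)
          = if rr = 0 then (if a = 0 then (1:ℝ) else 0) else 0 from by
        by_cases h1 : rr = 0 <;> by_cases h2 : a = 0 <;> simp [h1, h2]])]
    rw [Finset.sum_ite_eq']
    simp
  have hM : matRelu ((selVec p (0 : Fin p))ᵀ * bqMat p)
      = Matrix.of fun (a j : Fin p) => if a = 0 then 1 else 0 := by
    rw [hP]; ext a j; by_cases h : a = 0 <;> simp [matRelu, h]
  simp only [attention, Matrix.zero_mul, zero_add, add_zero, hM]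
  ext i j
  rw [Matrix.mul_apply]
  simp only [Matrix.of_apply, mul_ite, mul_one, mul_zero]
  rw [Finset.sum_ite_eq']
  simp [embed_mul_apply]

lemma att_prod (l1 l2 : Fin s) (e : ℝ) (Y : Matrix (Fin s) (Fin p) ℝ) :
    attention (e • selVec p l2) (selVec p l1) 0 0 0 (lastSel s p) Y
      = Matrix.of fun i j => if i = Fin.last s then relu (Y l1 0 * (e * Y l2 j)) else 0 := by
  have hsel : ∀ (l : Fin s) (rr : Fin p) (a : Fin p), (selVec p l * Y) rr a
      = if rr = 0 then Y l a else 0 := by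
    intro l rr a
    rw [Matrix.mul_apply]
    simp only [selVec, Matrix.of_apply, ite_mul, one_mul, zero_mul]
    rw [Finset.sum_congr rfl (fun b _ => by
      rw [show (if rr = 0 ∧ b = l then Y b a else 0)
          = if b = l then (if rr = 0 then Y l a else 0) else 0 from by
        by_cases h1 : rr = 0 <;> by_cases h2 : b = l <;> simp [h1, h2] <;> rw [h2]]),
      Finset.sum_ite_eq']
    simp
  have hQ : ∀ (a j : Fin p), ((selVec p l1 * Y)ᵀ * (e • (selVec p l2 * Y))) a j
      = Y l1 a * (e * Y l2 j) := by
    intro a j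
    rw [Matrix.mul_apply]
    simp only [transpose_apply, Matrix.smul_apply, hsel, smul_eq_mul]
    rw [Finset.sum_congr rfl (fun rr _ => by
      rw [show (if rr = 0 then Y l1 a else 0) * (e * if rr = 0 then Y l2 j else 0)
          = if rr = 0 then Y l1 a * (e * Y l2 j) else 0 from by
        by_cases h1 : rr = 0 <;> simp [h1]]), Finset.sum_ite_eq']
    simp
  ext i j
  rw [attention]
  simp only [Matrix.zero_mul, zero_add, add_zero, Matrix.smul_mul]
  rw [Matrix.mul_apply]
  simp only [lastSel, matRelu, Matrix.of_apply, hQ, ite_mul, one_mul, zero_mul]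
  rw [Finset.sum_congr rfl (fun a _ => by
    rw [show (if i = Fin.last s ∧ a = 0
            then relu (Y l1 a * (e * Y l2 j)) else 0)
        = if a = 0 then (if i = Fin.last s then relu (Y l1 0 * (e * Y l2 j)) else 0) else 0 from by
      by_cases h1 : i = Fin.last s <;> by_cases h2 : a = 0 <;> simp [h1, h2] <;> rw [h2]]),
    Finset.sum_ite_eq']
  simp

lemma att_affine {mm : ℕ} (b dd : Fin p) (AV : Matrix (Fin mm) (Fin s) ℝ)
    (BV : Matrix (Fin mm) (Fin p) ℝ) (Y : Matrix (Fin s) (Fin p) ℝ) :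
    attention 0 0 AV (selVec p dd) (selVec p b) BV Y
      = Matrix.of fun c j => if j = dd then ((AV * Y) c b + BV c b) else 0 := by
  have hP : (selVec p b)ᵀ * (selVec p dd)
      = Matrix.of fun (a j : Fin p) => if a = b ∧ j = dd then 1 else 0 := by
    ext a j
    rw [Matrix.mul_apply]
    simp only [transpose_apply, selVec, Matrix.of_apply, ite_mul, one_mul, zero_mul]
    rw [Finset.sum_congr rfl (fun rr _ => by
      rw [show (if rr = 0 ∧ a = b then (if rr = 0 ∧ j = dd then (1:ℝ) else 0) else 0)
          = if rr = 0 then (if a = b ∧ j = dd then (1:ℝ) else 0) else 0 from by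
        by_cases h1 : rr = 0 <;> by_cases h2 : a = b <;> by_cases h3 : j = dd <;>
          simp [h1, h2, h3]]), Finset.sum_ite_eq']
    simp
  have hM : matRelu ((selVec p b)ᵀ * (selVec p dd))
      = Matrix.of fun (a j : Fin p) => if a = b ∧ j = dd then 1 else 0 := by
    rw [hP]; ext a j; by_cases h : a = b ∧ j = dd <;> simp [matRelu, h]
  simp only [attention, Matrix.zero_mul, zero_add, hM]
  ext c j
  rw [Matrix.mul_apply]
  simp only [Matrix.of_apply, Matrix.add_apply]
  rw [Finset.sum_congr rfl (fun a _ => by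
    rw [show ((AV * Y) c a + BV c a) * (if a = b ∧ j = dd then (1:ℝ) else 0)
        = if a = b then (if j = dd then ((AV * Y) c b + BV c b) else 0) else 0 from by
      by_cases h1 : a = b <;> by_cases h2 : j = dd <;> simp [h1, h2] <;> rw [h1]]),
    Finset.sum_ite_eq']
  simp

lemma IsEncoderBlock1.congr {n r p : ℕ} {f g : Matrix (Fin n) (Fin p) ℝ → Matrix (Fin r) (Fin p) ℝ}
    (h : f = g) (hg : IsEncoderBlock1 g) : IsEncoderBlock1 f := h ▸ hg

lemma multihead_sum {n p d m h : ℕ}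
    (AQ AK : Fin h → Matrix (Fin d) (Fin n) ℝ) (AV : Fin h → Matrix (Fin m) (Fin n) ℝ)
    (BQ BK : Fin h → Matrix (Fin d) (Fin p) ℝ) (BV : Fin h → Matrix (Fin m) (Fin p) ℝ)
    (X : Matrix (Fin n) (Fin p) ℝ) (j : Fin p) (g : Fin (h * m) → ℝ) :
    (∑ I : Fin (h * m), g I * multiheadAttention AQ AK AV BQ BK BV X I j)
      = ∑ hd, ∑ row, g (finProdFinEquiv (hd, row))
          * attention (AQ hd) (AK hd) (AV hd) (BQ hd) (BK hd) (BV hd) X row j := by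
  rw [← Equiv.sum_comp (finProdFinEquiv : Fin h × Fin m ≃ Fin (h * m))
    (fun I => g I * multiheadAttention AQ AK AV BQ BK BV X I j)]
  simp only [multiheadAttention, Equiv.symm_apply_apply, Matrix.of_apply]
  rw [Fintype.sum_prod_type]

def affineFun {n r p : ℕ} (W : Fin r → Fin p → Fin n → Fin p → ℝ)
    (B : Matrix (Fin r) (Fin p) ℝ) :
    Matrix (Fin n) (Fin p) ℝ → Matrix (Fin r) (Fin p) ℝ :=
  fun X => Matrix.of fun c j => (∑ a, ∑ b, W c j a b * X a b) + B c j

def affAV {n r p : ℕ} (W : Fin r → Fin p → Fin n → Fin p → ℝ) (I1 : Fin (p * p)) :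
    Matrix (Fin r) (Fin n) ℝ :=
  Matrix.of fun c a => W c (finProdFinEquiv.symm I1).2 a (finProdFinEquiv.symm I1).1

def affBV {r p : ℕ} [NeZero p] (B : Matrix (Fin r) (Fin p) ℝ) (I1 : Fin (p * p)) :
    Matrix (Fin r) (Fin p) ℝ :=
  Matrix.of fun c _ =>
    if (finProdFinEquiv.symm I1).1 = 0 then B c (finProdFinEquiv.symm I1).2 else 0

lemma isEncoderBlock_affine {n r p : ℕ} [NeZero p] (W : Fin r → Fin p → Fin n → Fin p → ℝ)
    (B : Matrix (Fin r) (Fin p) ℝ) : IsEncoderBlock1 (affineFun W B) := by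
  refine IsEncoderBlock1.congr ?_ (isEncoderBlock_master (n := n) (r := r) (p := p) p r (p * p)
    (fun _ => 0) (fun _ => 0) (affAV W)
    (fun I1 => selVec p (finProdFinEquiv.symm I1).2)
    (fun I1 => selVec p (finProdFinEquiv.symm I1).1)
    (affBV B)
    (Matrix.of fun c I => if (finProdFinEquiv.symm I).2 = c then (1:ℝ) else 0)
    0 (fun _ => false))
  funext X
  ext c j
  simp only [affineFun, Matrix.of_apply, if_false, Bool.false_eq_true, Pi.zero_apply, add_zero]
  rw [multihead_sum]
  have e1 : ∀ hd : Fin (p * p),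
      (∑ row : Fin r,
        (if (finProdFinEquiv.symm (finProdFinEquiv (hd, row))).2 = c then (1:ℝ) else 0)
        * attention 0 0 (affAV W hd) (selVec p (finProdFinEquiv.symm hd).2)
            (selVec p (finProdFinEquiv.symm hd).1) (affBV B hd) X row j)
      = if j = (finProdFinEquiv.symm hd).2
          then ((affAV W hd * X) c (finProdFinEquiv.symm hd).1
            + affBV B hd c (finProdFinEquiv.symm hd).1) else 0 := by
    intro hd
    simp only [Matrix.of_apply, Equiv.symm_apply_apply, ite_mul, one_mul, zero_mul]
    rw [Finset.sum_ite_eq' Finset.univ c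
      (fun row => attention 0 0 (affAV W hd) (selVec p (finProdFinEquiv.symm hd).2)
        (selVec p (finProdFinEquiv.symm hd).1) (affBV B hd) X row j)]
    simp only [Finset.mem_univ, if_true]
    rw [att_affine]
    simp
  rw [Finset.sum_congr rfl (fun hd _ => e1 hd)]
  rw [← Equiv.sum_comp (finProdFinEquiv : Fin p × Fin p ≃ Fin (p * p))
    (fun hd => if j = (finProdFinEquiv.symm hd).2
      then ((affAV W hd * X) c (finProdFinEquiv.symm hd).1
        + affBV B hd c (finProdFinEquiv.symm hd).1) else 0)]
  simp only [Equiv.symm_apply_apply]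
  rw [Fintype.sum_prod_type]
  have e2 : ∀ b : Fin p,
      (∑ dd : Fin p, if j = dd
        then ((affAV W (finProdFinEquiv (b, dd)) * X) c b
          + affBV B (finProdFinEquiv (b, dd)) c b) else 0)
      = (∑ a, W c j a b * X a b) + (if b = 0 then B c j else 0) := by
    intro b
    rw [Finset.sum_ite_eq Finset.univ j (fun dd =>
      (affAV W (finProdFinEquiv (b, dd)) * X) c b + affBV B (finProdFinEquiv (b, dd)) c b)]
    simp only [Finset.mem_univ, if_true, affAV, affBV, Matrix.of_apply, Equiv.symm_apply_apply]
    rw [Matrix.mul_apply]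
    simp
  rw [Finset.sum_congr rfl (fun b _ => e2 b), Finset.sum_add_distrib]
  congr 1
  · rw [Finset.sum_comm]
  · rw [Finset.sum_ite_eq' Finset.univ (0 : Fin p) (fun _ => B c j)]
    simp

def extMulFun {p : ℕ} [NeZero p] (s : ℕ) (l1 l2 : Fin s) :
    Matrix (Fin s) (Fin p) ℝ → Matrix (Fin (s+1)) (Fin p) ℝ :=
  fun Y => Matrix.of fun i j => Fin.lastCases (Y l1 0 * Y l2 j) (fun i' => Y i' j) i

def extReluFun {p : ℕ} [NeZero p] (s : ℕ) (l : Fin s) :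
    Matrix (Fin s) (Fin p) ℝ → Matrix (Fin (s+1)) (Fin p) ℝ :=
  fun Y => Matrix.of fun i j => Fin.lastCases (relu (Y l 0)) (fun i' => Y i' j) i

lemma isEncoderBlock_extMul {s p : ℕ} [NeZero p] (l1 l2 : Fin s) :
    IsEncoderBlock1 (extMulFun (p := p) s l1 l2) := by
  refine IsEncoderBlock1.congr ?_ (isEncoderBlock_master (n := s) (r := s+1) (p := p) p (s+1) 3
    ![0, (1:ℝ) • selVec p l2, (-1:ℝ) • selVec p l2]
    ![0, selVec p l1, selVec p l1]
    ![embedAV s, 0, 0]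
    ![1, 0, 0] ![1, 0, 0]
    ![0, lastSel s p, lastSel s p]
    (Matrix.of fun c I => if (finProdFinEquiv.symm I).2 = c
      then ![(1:ℝ), 1, -1] (finProdFinEquiv.symm I).1 else 0)
    0 (fun _ => false))
  funext Y
  ext c j
  simp only [extMulFun, Matrix.of_apply, if_false, Bool.false_eq_true, Pi.zero_apply, add_zero]
  rw [multihead_sum]
  have e1 : ∀ hd : Fin 3,
      (∑ row : Fin (s+1),
        (if (finProdFinEquiv.symm (finProdFinEquiv (hd, row))).2 = c
          then ![(1:ℝ), 1, -1] (finProdFinEquiv.symm (finProdFinEquiv (hd, row))).1 else 0)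
        * attention (![0, (1:ℝ) • selVec p l2, (-1:ℝ) • selVec p l2] hd)
            (![0, selVec p l1, selVec p l1] hd) (![embedAV s, 0, 0] hd)
            (![1, 0, 0] hd) (![1, 0, 0] hd) (![0, lastSel s p, lastSel s p] hd) Y row j)
      = ![(1:ℝ), 1, -1] hd
        * attention (![0, (1:ℝ) • selVec p l2, (-1:ℝ) • selVec p l2] hd)
            (![0, selVec p l1, selVec p l1] hd) (![embedAV s, 0, 0] hd)
            (![1, 0, 0] hd) (![1, 0, 0] hd) (![0, lastSel s p, lastSel s p] hd) Y c j := by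
    intro hd
    simp only [Equiv.symm_apply_apply, ite_mul, zero_mul]
    rw [Finset.sum_ite_eq' Finset.univ c]
    simp
  rw [Finset.sum_congr rfl (fun hd _ => e1 hd)]
  rw [Fin.sum_univ_three]
  simp only [Matrix.cons_val_zero, Matrix.cons_val_one, Matrix.head_cons]
  rw [show ((![(1:ℝ), 1, -1] 2) = -1) from rfl,
    show (![0, (1:ℝ) • selVec p l2, (-1:ℝ) • selVec p l2] 2 = (-1:ℝ) • selVec p l2) from rfl,
    show (![(0 : Matrix (Fin p) (Fin s) ℝ), selVec p l1, selVec p l1] 2 = selVec p l1) from rfl,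
    show (![embedAV s, 0, 0] 2 = (0 : Matrix (Fin (s+1)) (Fin s) ℝ)) from rfl,
    show (![(1 : Matrix (Fin p) (Fin p) ℝ), 0, 0] 2 = 0) from rfl,
    show (![(0 : Matrix (Fin (s+1)) (Fin p) ℝ), lastSel s p, lastSel s p] 2 = lastSel s p) from rfl]
  rw [att_id, att_prod l1 l2 1 Y, att_prod l1 l2 (-1) Y]
  simp only [Matrix.of_apply, one_mul, embed_mul_apply]
  induction c using Fin.lastCases with
  | last =>
      simp only [Fin.lastCases_last, if_pos rfl, if_true]
      have := relu_sub_relu_neg (Y l1 0 * Y l2 j)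
      have h2 : Y l1 0 * (-1 * Y l2 j) = -(Y l1 0 * Y l2 j) := by ring
      rw [h2]
      linarith
  | cast c' =>
      have hne : (Fin.castSucc c') ≠ Fin.last s := (Fin.castSucc_lt_last c').ne
      simp [Fin.lastCases_castSucc, hne]

lemma isEncoderBlock_extRelu {s p : ℕ} [NeZero p] (l : Fin s) :
    IsEncoderBlock1 (extReluFun (p := p) s l) := by
  refine IsEncoderBlock1.congr ?_ (isEncoderBlock_master (n := s) (r := s+1) (p := p) p (s+1) 2
    ![0, 0] ![0, 0] ![embedAV s, embedAV s]
    ![1, bqMat p] ![1, selVec p (0 : Fin p)] ![0, 0]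
    (Matrix.of fun c I => if c = Fin.last s
      then (if (finProdFinEquiv.symm I).1 = 1 ∧ (finProdFinEquiv.symm I).2 = Fin.castSucc l
        then (1:ℝ) else 0)
      else (if (finProdFinEquiv.symm I).1 = 0 ∧ (finProdFinEquiv.symm I).2 = c
        then (1:ℝ) else 0))
    0 (fun c => decide (c = Fin.last s)))
  funext Y
  ext c j
  simp only [extReluFun, Matrix.of_apply, Pi.zero_apply, add_zero]
  rw [multihead_sum]
  simp only [Equiv.symm_apply_apply]
  induction c using Fin.lastCases with
  | last =>
      rw [Fin.lastCases_last]
      simp only [decide_eq_true_eq, if_pos rfl, if_true]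
      congr 1
      rw [Fin.sum_univ_two]
      have h0 : ∀ row : Fin (s+1),
          (if (0 : Fin 2) = 1 ∧ row = Fin.castSucc l then (1:ℝ) else 0) = 0 := by
        intro row; simp
      have h1 : ∀ row : Fin (s+1),
          (if (1 : Fin 2) = 1 ∧ row = Fin.castSucc l then (1:ℝ) else 0)
            = if row = Fin.castSucc l then (1:ℝ) else 0 := by
        intro row; simp
      simp only [h0, h1, zero_mul, Finset.sum_const_zero, ite_mul, one_mul, zero_mul, zero_add]
      simp only [true_and]
      rw [Finset.sum_ite_eq' Finset.univ (Fin.castSucc l)]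
      simp only [Finset.mem_univ, if_true]
      rw [show (![(0 : Matrix (Fin p) (Fin s) ℝ), 0] 1 = 0) from rfl,
        show (![embedAV s, embedAV s] 1 = embedAV s) from rfl,
        show (![(1 : Matrix (Fin p) (Fin p) ℝ), bqMat p] 1 = bqMat p) from rfl,
        show (![(1 : Matrix (Fin p) (Fin p) ℝ), selVec p (0 : Fin p)] 1 = selVec p 0) from rfl,
        show (![(0 : Matrix (Fin (s+1)) (Fin p) ℝ), 0] 1 = 0) from rfl]
      rw [att_bcast]
      simp
  | cast c' =>
      have hne : (Fin.castSucc c') ≠ Fin.last s := (Fin.castSucc_lt_last c').ne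
      rw [Fin.lastCases_castSucc]
      simp only [decide_eq_true_eq, hne, if_false]
      rw [Fin.sum_univ_two]
      have h0 : ∀ row : Fin (s+1),
          (if (0 : Fin 2) = 0 ∧ row = Fin.castSucc c' then (1:ℝ) else 0)
            = if row = Fin.castSucc c' then (1:ℝ) else 0 := by
        intro row; simp
      have h1 : ∀ row : Fin (s+1),
          (if (1 : Fin 2) = 0 ∧ row = Fin.castSucc c' then (1:ℝ) else 0) = 0 := by
        intro row; simp
      simp only [h0, h1, zero_mul, Finset.sum_const_zero, ite_mul, one_mul, add_zero]
      simp only [true_and]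
      rw [Finset.sum_ite_eq' Finset.univ (Fin.castSucc c')]
      simp only [Finset.mem_univ, if_true]
      rw [show (![(0 : Matrix (Fin p) (Fin s) ℝ), 0] 0 = 0) from rfl,
        show (![embedAV s, embedAV s] 0 = embedAV s) from rfl,
        show (![(1 : Matrix (Fin p) (Fin p) ℝ), bqMat p] 0 = 1) from rfl,
        show (![(1 : Matrix (Fin p) (Fin p) ℝ), selVec p (0 : Fin p)] 0 = 1) from rfl,
        show (![(0 : Matrix (Fin (s+1)) (Fin p) ℝ), 0] 0 = 0) from rfl]
      rw [att_id]
      rw [embed_mul_apply]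
      simp

def Good {n r p : ℕ} (F : Matrix (Fin n) (Fin p) ℝ → Matrix (Fin r) (Fin p) ℝ) : Prop :=
  ∃ t, IsEncoder1 t F

lemma isEncoder1_comp {p n s : ℕ} {f : Matrix (Fin n) (Fin p) ℝ → Matrix (Fin s) (Fin p) ℝ}
    {t : ℕ} (hf : IsEncoder1 t f) :
    ∀ {r' : ℕ} {g : Matrix (Fin s) (Fin p) ℝ → Matrix (Fin r') (Fin p) ℝ} {u : ℕ},
      IsEncoder1 u g → ∃ v, IsEncoder1 v (g ∘ f) := by
  induction hf with
  | block f' hf' => exact fun hg => ⟨_ + 1, .comp _ f' _ hf' hg⟩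
  | comp t f' g' hf' hg' ih =>
      intro r' g u hg
      obtain ⟨v, hv⟩ := ih hg
      exact ⟨v + 1, .comp v f' _ hf' hv⟩

lemma Good.compG {n s r p : ℕ} {F : Matrix (Fin n) (Fin p) ℝ → Matrix (Fin s) (Fin p) ℝ}
    {G : Matrix (Fin s) (Fin p) ℝ → Matrix (Fin r) (Fin p) ℝ}
    (hF : Good F) (hG : Good G) : Good (G ∘ F) := by
  obtain ⟨t, ht⟩ := hF; obtain ⟨u, hu⟩ := hG
  exact isEncoder1_comp ht hu

lemma Good.ofBlock {n r p : ℕ} {F : Matrix (Fin n) (Fin p) ℝ → Matrix (Fin r) (Fin p) ℝ}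
    (h : IsEncoderBlock1 F) : Good F := ⟨1, .block F h⟩

section Tracked

variable {n p : ℕ} [NeZero p]

def Tracks {s : ℕ} (F : Matrix (Fin n) (Fin p) ℝ → Matrix (Fin s) (Fin p) ℝ)
    (g : Matrix (Fin n) (Fin p) ℝ → ℝ) : Prop :=
  ∃ l, ∀ X, F X l 0 = g X

def TrackedSet (G : Set (Matrix (Fin n) (Fin p) ℝ → ℝ)) : Prop :=
  ∃ (s : ℕ) (F : Matrix (Fin n) (Fin p) ℝ → Matrix (Fin s) (Fin p) ℝ),
    Good F ∧ (∀ a b, Tracks F (fun X => X a b)) ∧ (∀ g ∈ G, Tracks F g)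

lemma TrackedSet.mono {G G' : Set (Matrix (Fin n) (Fin p) ℝ → ℝ)} (hsub : G' ⊆ G)
    (h : TrackedSet G) : TrackedSet G' := by
  obtain ⟨s, F, hF, hco, htr⟩ := h
  exact ⟨s, F, hF, hco, fun g hg => htr g (hsub hg)⟩

lemma affineFun_apply {r : ℕ} (W : Fin r → Fin p → Fin n → Fin p → ℝ)
    (B : Matrix (Fin r) (Fin p) ℝ) (X : Matrix (Fin n) (Fin p) ℝ) (c : Fin r) (j : Fin p) :
    affineFun W B X c j = (∑ a, ∑ b, W c j a b * X a b) + B c j := rfl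

lemma trackedSet_empty : TrackedSet (n := n) (p := p) ∅ := by
  refine ⟨n * p, affineFun (fun i _ a b =>
      if a = (finProdFinEquiv.symm i).1 ∧ b = (finProdFinEquiv.symm i).2 then 1 else 0) 0,
    Good.ofBlock (isEncoderBlock_affine _ _), fun a b => ⟨finProdFinEquiv (a, b), fun X => ?_⟩,
    fun g hg => absurd hg (Set.notMem_empty g)⟩
  rw [affineFun_apply]
  simp only [Equiv.symm_apply_apply, Matrix.zero_apply, add_zero]
  rw [Finset.sum_congr rfl (fun a' _ => by
    rw [show (∑ b', (if a' = a ∧ b' = b then (1:ℝ) else 0) * X a' b')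
        = if a' = a then X a b else 0 from by
      rw [Finset.sum_congr rfl (fun b' _ => by
        rw [show ((if a' = a ∧ b' = b then (1:ℝ) else 0) * X a' b')
            = if b' = b then (if a' = a then X a b else 0) else 0 from by
          by_cases h1 : a' = a <;> by_cases h2 : b' = b <;> simp [h1, h2] <;> rw [h1, h2]]),
        Finset.sum_ite_eq' Finset.univ b]
      simp]), Finset.sum_ite_eq' Finset.univ a]
  simp

end Tracked

section Ext

variable {n p : ℕ} [NeZero p]

def extLinFun (s : ℕ) (coef : Fin s → ℝ) (c0 : ℝ) :
    Matrix (Fin s) (Fin p) ℝ → Matrix (Fin (s+1)) (Fin p) ℝ :=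
  affineFun
    (fun i j a b => if i = Fin.last s then (if b = 0 then coef a else 0)
      else (if a.castSucc = i ∧ b = j then 1 else 0))
    (Matrix.of fun i _ => if i = Fin.last s then c0 else 0)

lemma extLinFun_last (s : ℕ) (coef : Fin s → ℝ) (c0 : ℝ) (Y : Matrix (Fin s) (Fin p) ℝ)
    (j : Fin p) : extLinFun s coef c0 Y (Fin.last s) j = (∑ a, coef a * Y a 0) + c0 := by
  rw [extLinFun, affineFun_apply]
  simp only [if_pos rfl, if_true, Matrix.of_apply]
  congr 1
  refine Finset.sum_congr rfl (fun a _ => ?_)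
  rw [Finset.sum_congr rfl (fun b _ => by
    rw [show ((if b = 0 then coef a else 0) * Y a b)
        = if b = 0 then coef a * Y a 0 else 0 from by
      by_cases h : b = (0 : Fin p) <;> simp [h]]), Finset.sum_ite_eq' Finset.univ (0 : Fin p)]
  simp

lemma extLinFun_castSucc (s : ℕ) (coef : Fin s → ℝ) (c0 : ℝ) (Y : Matrix (Fin s) (Fin p) ℝ)
    (i : Fin s) (j : Fin p) : extLinFun s coef c0 Y i.castSucc j = Y i j := by
  have hne : i.castSucc ≠ Fin.last s := (Fin.castSucc_lt_last i).ne
  rw [extLinFun, affineFun_apply]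
  simp only [hne, if_false, Matrix.of_apply, add_zero]
  rw [Finset.sum_congr rfl (fun a _ => by
    rw [show (∑ b, (if a.castSucc = i.castSucc ∧ b = j then (1:ℝ) else 0) * Y a b)
        = if a = i then Y i j else 0 from by
      rw [Finset.sum_congr rfl (fun b _ => by
        rw [show ((if a.castSucc = i.castSucc ∧ b = j then (1:ℝ) else 0) * Y a b)
            = if b = j then (if a = i then Y i j else 0) else 0 from by
          by_cases h1 : a = i <;> by_cases h2 : b = j <;>
            simp [h1, h2, Fin.castSucc_inj] <;> rw [h2]]),
        Finset.sum_ite_eq' Finset.univ j]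
      simp]), Finset.sum_ite_eq' Finset.univ i]
  simp

lemma TrackedSet.insert_comb {G : Set (Matrix (Fin n) (Fin p) ℝ → ℝ)}
    {g1 g2 : Matrix (Fin n) (Fin p) ℝ → ℝ}
    (h : TrackedSet G) (h1 : g1 ∈ G) (h2 : g2 ∈ G) (a b c : ℝ) :
    TrackedSet (insert (fun X => a * g1 X + b * g2 X + c) G) := by
  obtain ⟨s, F, hF, hco, htr⟩ := h
  obtain ⟨l1, hl1⟩ := htr g1 h1
  obtain ⟨l2, hl2⟩ := htr g2 h2
  set coef : Fin s → ℝ := fun i => (if i = l1 then a else 0) + (if i = l2 then b else 0) with hcoef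
  refine ⟨s + 1, extLinFun s coef c ∘ F,
    hF.compG (Good.ofBlock (isEncoderBlock_affine _ _)), ?_, ?_⟩
  · intro a' b'
    obtain ⟨l, hl⟩ := hco a' b'
    exact ⟨l.castSucc, fun X => by
      rw [Function.comp_apply, extLinFun_castSucc]; exact hl X⟩
  · rintro g (rfl | hg)
    · refine ⟨Fin.last s, fun X => ?_⟩
      rw [Function.comp_apply, extLinFun_last]
      simp only [hcoef, add_mul, Finset.sum_add_distrib, ite_mul, zero_mul]
      rw [Finset.sum_ite_eq' Finset.univ l1 (fun i => a * F X i 0),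
        Finset.sum_ite_eq' Finset.univ l2 (fun i => b * F X i 0)]
      simp [hl1 X, hl2 X]
    · obtain ⟨l, hl⟩ := htr g hg
      exact ⟨l.castSucc, fun X => by
        rw [Function.comp_apply, extLinFun_castSucc]; exact hl X⟩

lemma TrackedSet.insert_const {G : Set (Matrix (Fin n) (Fin p) ℝ → ℝ)}
    (h : TrackedSet G) (c : ℝ) : TrackedSet (insert (fun _ => c) G) := by
  obtain ⟨s, F, hF, hco, htr⟩ := h
  refine ⟨s + 1, extLinFun s 0 c ∘ F,
    hF.compG (Good.ofBlock (isEncoderBlock_affine _ _)), ?_, ?_⟩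
  · intro a' b'
    obtain ⟨l, hl⟩ := hco a' b'
    exact ⟨l.castSucc, fun X => by
      rw [Function.comp_apply, extLinFun_castSucc]; exact hl X⟩
  · rintro g (rfl | hg)
    · exact ⟨Fin.last s, fun X => by rw [Function.comp_apply, extLinFun_last]; simp⟩
    · obtain ⟨l, hl⟩ := htr g hg
      exact ⟨l.castSucc, fun X => by
        rw [Function.comp_apply, extLinFun_castSucc]; exact hl X⟩

lemma TrackedSet.insert_mul {G : Set (Matrix (Fin n) (Fin p) ℝ → ℝ)}
    {g1 g2 : Matrix (Fin n) (Fin p) ℝ → ℝ}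
    (h : TrackedSet G) (h1 : g1 ∈ G) (h2 : g2 ∈ G) :
    TrackedSet (insert (fun X => g1 X * g2 X) G) := by
  obtain ⟨s, F, hF, hco, htr⟩ := h
  obtain ⟨l1, hl1⟩ := htr g1 h1
  obtain ⟨l2, hl2⟩ := htr g2 h2
  refine ⟨s + 1, extMulFun s l1 l2 ∘ F,
    hF.compG (Good.ofBlock (isEncoderBlock_extMul _ _)), ?_, ?_⟩
  · intro a' b'
    obtain ⟨l, hl⟩ := hco a' b'
    exact ⟨l.castSucc, fun X => by
      rw [Function.comp_apply]
      show extMulFun s l1 l2 (F X) l.castSucc 0 = _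
      rw [extMulFun]
      simp only [Matrix.of_apply, Fin.lastCases_castSucc]
      exact hl X⟩
  · rintro g (rfl | hg)
    · refine ⟨Fin.last s, fun X => ?_⟩
      rw [Function.comp_apply]
      show extMulFun s l1 l2 (F X) (Fin.last s) 0 = _
      rw [extMulFun]
      simp only [Matrix.of_apply, Fin.lastCases_last]
      rw [hl1 X, hl2 X]
    · obtain ⟨l, hl⟩ := htr g hg
      exact ⟨l.castSucc, fun X => by
        rw [Function.comp_apply]
        show extMulFun s l1 l2 (F X) l.castSucc 0 = _
        rw [extMulFun]
        simp only [Matrix.of_apply, Fin.lastCases_castSucc]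
        exact hl X⟩

lemma TrackedSet.insert_relu {G : Set (Matrix (Fin n) (Fin p) ℝ → ℝ)}
    {g1 : Matrix (Fin n) (Fin p) ℝ → ℝ}
    (h : TrackedSet G) (h1 : g1 ∈ G) :
    TrackedSet (insert (fun X => relu (g1 X)) G) := by
  obtain ⟨s, F, hF, hco, htr⟩ := h
  obtain ⟨l1, hl1⟩ := htr g1 h1
  refine ⟨s + 1, extReluFun s l1 ∘ F,
    hF.compG (Good.ofBlock (isEncoderBlock_extRelu _)), ?_, ?_⟩
  · intro a' b'
    obtain ⟨l, hl⟩ := hco a' b'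
    exact ⟨l.castSucc, fun X => by
      rw [Function.comp_apply]
      show extReluFun s l1 (F X) l.castSucc 0 = _
      rw [extReluFun]
      simp only [Matrix.of_apply, Fin.lastCases_castSucc]
      exact hl X⟩
  · rintro g (rfl | hg)
    · refine ⟨Fin.last s, fun X => ?_⟩
      rw [Function.comp_apply]
      show extReluFun s l1 (F X) (Fin.last s) 0 = _
      rw [extReluFun]
      simp only [Matrix.of_apply, Fin.lastCases_last]
      rw [hl1 X]
    · obtain ⟨l, hl⟩ := htr g hg
      exact ⟨l.castSucc, fun X => by
        rw [Function.comp_apply]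
        show extReluFun s l1 (F X) l.castSucc 0 = _
        rw [extReluFun]
        simp only [Matrix.of_apply, Fin.lastCases_castSucc]
        exact hl X⟩

end Ext

section NiceSec

variable {n p : ℕ}

inductive Nice : (Matrix (Fin n) (Fin p) ℝ → ℝ) → Prop
  | coord (a : Fin n) (b : Fin p) : Nice fun X => X a b
  | const (c : ℝ) : Nice fun _ => c
  | comb (a b c : ℝ) {g1 g2 : Matrix (Fin n) (Fin p) ℝ → ℝ} :
      Nice g1 → Nice g2 → Nice fun X => a * g1 X + b * g2 X + c
  | mul {g1 g2 : Matrix (Fin n) (Fin p) ℝ → ℝ} :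
      Nice g1 → Nice g2 → Nice fun X => g1 X * g2 X
  | relu {g : Matrix (Fin n) (Fin p) ℝ → ℝ} : Nice g → Nice fun X => relu (g X)

lemma Nice.congr {g g' : Matrix (Fin n) (Fin p) ℝ → ℝ} (h : Nice g) (he : ∀ X, g' X = g X) :
    Nice g' := by rw [show g' = g from funext he]; exact h

lemma nice_trackedSet [NeZero p] {g : Matrix (Fin n) (Fin p) ℝ → ℝ} (hg : Nice g) :
    ∀ {G : Set (Matrix (Fin n) (Fin p) ℝ → ℝ)}, TrackedSet G → TrackedSet (insert g G) := by
  induction hg with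
  | coord a b =>
      intro G hG
      obtain ⟨s, F, hF, hco, htr⟩ := hG
      refine ⟨s, F, hF, hco, ?_⟩
      rintro g (rfl | hg)
      · exact hco a b
      · exact htr g hg
  | const c => exact fun hG => hG.insert_const c
  | comb a b c h1 h2 ih1 ih2 =>
      intro G hG
      have T2 := ih2 (ih1 hG)
      have T3 := T2.insert_comb (Set.mem_insert_of_mem _ (Set.mem_insert _ _))
        (Set.mem_insert _ _) a b c
      exact T3.mono (Set.insert_subset_insert (fun x hx =>
        Set.mem_insert_of_mem _ (Set.mem_insert_of_mem _ hx)))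
  | mul h1 h2 ih1 ih2 =>
      intro G hG
      have T2 := ih2 (ih1 hG)
      have T3 := T2.insert_mul (Set.mem_insert_of_mem _ (Set.mem_insert _ _))
        (Set.mem_insert _ _)
      exact T3.mono (Set.insert_subset_insert (fun x hx =>
        Set.mem_insert_of_mem _ (Set.mem_insert_of_mem _ hx)))
  | relu h1 ih1 =>
      intro G hG
      have T2 := ih1 hG
      have T3 := T2.insert_relu (Set.mem_insert _ _)
      exact T3.mono (Set.insert_subset_insert (fun x hx => Set.mem_insert_of_mem _ hx))

lemma Nice.add {g1 g2 : Matrix (Fin n) (Fin p) ℝ → ℝ} (h1 : Nice g1) (h2 : Nice g2) :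
    Nice fun X => g1 X + g2 X :=
  (Nice.comb 1 1 0 h1 h2).congr (fun X => by ring)

lemma Nice.sub {g1 g2 : Matrix (Fin n) (Fin p) ℝ → ℝ} (h1 : Nice g1) (h2 : Nice g2) :
    Nice fun X => g1 X - g2 X :=
  (Nice.comb 1 (-1) 0 h1 h2).congr (fun X => by ring)

lemma min_eq_sub_relu (a b : ℝ) : min a b = b - relu (b - a) := by
  rcases le_total a b with h | h
  · simp [relu, min_eq_left h, max_eq_left (sub_nonneg.2 h)]
  · simp [relu, min_eq_right h, max_eq_right (sub_nonpos.2 h)]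

lemma Nice.max {g1 g2 : Matrix (Fin n) (Fin p) ℝ → ℝ} (h1 : Nice g1) (h2 : Nice g2) :
    Nice fun X => max (g1 X) (g2 X) := by
  have hr : Nice (fun X => _root_.relu (g1 X - g2 X)) := (h1.sub h2).relu
  exact (h2.add hr).congr (fun X => max_eq_add_relu _ _)

lemma Nice.min {g1 g2 : Matrix (Fin n) (Fin p) ℝ → ℝ} (h1 : Nice g1) (h2 : Nice g2) :
    Nice fun X => min (g1 X) (g2 X) := by
  have hr : Nice (fun X => _root_.relu (g2 X - g1 X)) := (h2.sub h1).relu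
  exact (h2.sub hr).congr (fun X => min_eq_sub_relu _ _)

lemma Nice.evalPoly {N : ℕ} (q : MvPolynomial (Fin N) ℝ)
    (v : Fin N → Matrix (Fin n) (Fin p) ℝ → ℝ) (hv : ∀ l, Nice (v l)) :
    Nice fun X => MvPolynomial.eval (fun l => v l X) q := by
  induction q using MvPolynomial.induction_on with
  | C a => exact (Nice.const a).congr (fun X => by simp)
  | add q1 q2 hq1 hq2 => exact (hq1.add hq2).congr (fun X => by simp)
  | mul_X q1 l hq1 => exact (hq1.mul (hv l)).congr (fun X => by simp)

end NiceSec

section SupSec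

lemma bddAbove_range_fin {m : ℕ} (g : Fin m → ℝ) : BddAbove (Set.range g) :=
  Set.Finite.bddAbove (Set.finite_range g)

lemma bddBelow_range_fin {m : ℕ} (g : Fin m → ℝ) : BddBelow (Set.range g) :=
  Set.Finite.bddBelow (Set.finite_range g)

lemma iSup_fin_one (g : Fin 1 → ℝ) : ⨆ i, g i = g 0 := by
  rw [ciSup_unique]; simp [Fin.default_eq_zero]

lemma iInf_fin_one (g : Fin 1 → ℝ) : ⨅ i, g i = g 0 := by
  rw [ciInf_unique]; simp [Fin.default_eq_zero]

lemma iSup_fin_succ (m : ℕ) (g : Fin (m + 2) → ℝ) :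
    ⨆ i, g i = max (⨆ i : Fin (m + 1), g i.castSucc) (g (Fin.last (m + 1))) := by
  apply le_antisymm
  · apply ciSup_le
    intro i
    induction i using Fin.lastCases with
    | last => exact le_max_right _ _
    | cast i' =>
        exact le_trans (le_ciSup (f := fun i : Fin (m+1) => g i.castSucc)
          (bddAbove_range_fin _) i') (le_max_left _ _)
  · apply max_le
    · exact ciSup_le (fun i => le_ciSup (bddAbove_range_fin g) i.castSucc)
    · exact le_ciSup (bddAbove_range_fin g) (Fin.last (m + 1))

lemma iInf_fin_succ (m : ℕ) (g : Fin (m + 2) → ℝ) :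
    ⨅ i, g i = min (⨅ i : Fin (m + 1), g i.castSucc) (g (Fin.last (m + 1))) := by
  apply le_antisymm
  · apply le_min
    · exact le_ciInf (fun i => ciInf_le (bddBelow_range_fin g) i.castSucc)
    · exact ciInf_le (bddBelow_range_fin g) (Fin.last (m + 1))
  · apply le_ciInf
    intro i
    induction i using Fin.lastCases with
    | last => exact min_le_right _ _
    | cast i' =>
        exact le_trans (min_le_left _ _) (ciInf_le (f := fun i : Fin (m+1) => g i.castSucc)
          (bddBelow_range_fin _) i')

variable {n p : ℕ}

lemma Nice.iSupFin : ∀ (m : ℕ) (w : Fin (m + 1) → Matrix (Fin n) (Fin p) ℝ → ℝ),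
    (∀ i, Nice (w i)) → Nice fun X => ⨆ i, w i X := by
  intro m
  induction m with
  | zero => exact fun w hw => (hw 0).congr (fun X => iSup_fin_one _)
  | succ m ih =>
      intro w hw
      have h1 : Nice fun X => ⨆ i : Fin (m + 1), w i.castSucc X :=
        ih (fun i => w i.castSucc) (fun i => hw _)
      exact (h1.max (hw (Fin.last (m + 1)))).congr (fun X => iSup_fin_succ m (fun i => w i X))

lemma Nice.iInfFin : ∀ (m : ℕ) (w : Fin (m + 1) → Matrix (Fin n) (Fin p) ℝ → ℝ),
    (∀ i, Nice (w i)) → Nice fun X => ⨅ i, w i X := by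
  intro m
  induction m with
  | zero => exact fun w hw => (hw 0).congr (fun X => iInf_fin_one _)
  | succ m ih =>
      intro w hw
      have h1 : Nice fun X => ⨅ i : Fin (m + 1), w i.castSucc X :=
        ih (fun i => w i.castSucc) (fun i => hw _)
      exact (h1.min (hw (Fin.last (m + 1)))).congr (fun X => iInf_fin_succ m (fun i => w i X))

end SupSec

lemma spline_reindex {n p k : ℕ} {g : (Fin n × Fin p → ℝ) → ℝ}
    (hg : IsSpline (Fin n × Fin p) k g) :
    IsSpline (Fin (n * p)) k (fun y => g (fun ab => y (finProdFinEquiv ab))) := by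
  obtain ⟨hc, b, π, hdeg, hθ⟩ := hg
  refine ⟨hc.comp (continuous_pi (fun ab => continuous_apply (finProdFinEquiv ab))),
    b, fun i => MvPolynomial.rename finProdFinEquiv (π i),
    fun i => le_trans (MvPolynomial.totalDegree_rename_le _ _) (hdeg i), ?_⟩
  intro θ
  obtain ⟨ξ, hξd, hξ⟩ := hθ θ
  refine ⟨MvPolynomial.rename finProdFinEquiv ξ,
    le_trans (MvPolynomial.totalDegree_rename_le _ _) hξd, ?_⟩
  intro y hy
  rw [MvPolynomial.eval_rename]
  refine hξ (fun ab => y (finProdFinEquiv ab)) ?_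
  intro i
  have := hy i
  rwa [MvPolynomial.eval_rename] at this

lemma trackedSet_range {n p : ℕ} [NeZero p] :
    ∀ (N : ℕ) (u : Fin N → Matrix (Fin n) (Fin p) ℝ → ℝ),
      (∀ I, Nice (u I)) → TrackedSet (Set.range u) := by
  intro N
  induction N with
  | zero =>
      intro u _
      refine trackedSet_empty.mono ?_
      rintro g ⟨I, rfl⟩
      exact I.elim0
  | succ N ih =>
      intro u hu
      have h1 := ih (fun I => u I.succ) (fun I => hu I.succ)
      have h2 := nice_trackedSet (hu 0) h1
      refine h2.mono ?_
      rintro g ⟨I, rfl⟩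
      induction I using Fin.cases with
      | zero => exact Set.mem_insert _ _
      | succ i => exact Set.mem_insert_of_mem _ ⟨i, rfl⟩

/-- If the Pierce–Birkhoff conjecture holds in every dimension, then every matrix-valued spline
`f : ℝ^{n×p} → ℝ^{r×p}` of degree `k` is a ReLU encoder: for some finite `t` there are
multihead ReLU attention modules `α_1, …, α_t` and one-layer ReLU feed-forward neural networks
`φ_1, …, φ_t` (applied columnwise) with `f = φ_t ∘ α_t ∘ ⋯ ∘ φ_1 ∘ α_1`. -/
theorem spline_is_encoder_of_pierceBirkhoff (hPB : PierceBirkhoff) :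
    ∀ (n p r k : ℕ) (f : Matrix (Fin n) (Fin p) ℝ → Matrix (Fin r) (Fin p) ℝ),
      IsMatrixSpline k f → ∃ t : ℕ, IsEncoder1 t f := by
  intro n p r k f hf
  rcases p with _ | p'
  · -- p = 0 : trivial
    refine ⟨1, .block f ⟨0, 0, 0, 0, fun _ => 0, fun _ => 0, fun _ => 0, fun _ => 0,
      fun _ => 0, fun _ => 0, 0, fun _ => 0, 0, fun _ => 0, ?_⟩⟩
    funext X
    exact Matrix.ext fun c j => j.elim0
  haveI : NeZero (p' + 1) := ⟨Nat.succ_ne_zero p'⟩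
  -- each entry is a sup-inf of polynomials of the entries
  have key : ∀ (c : Fin r) (d : Fin (p' + 1)), ∃ (m q : ℕ)
      (ξ : Fin (m + 1) → Fin (q + 1) → MvPolynomial (Fin (n * (p' + 1))) ℝ),
      ∀ X : Matrix (Fin n) (Fin (p' + 1)) ℝ, f X c d
        = ⨆ i, ⨅ j, MvPolynomial.eval
            (fun l => X (finProdFinEquiv.symm l).1 (finProdFinEquiv.symm l).2) (ξ i j) := by
    intro c d
    have hs' := spline_reindex (hf c d)
    obtain ⟨m, q, ξ, hξ⟩ := hPB (n * (p' + 1)) _ ⟨k, hs'⟩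
    refine ⟨m, q, ξ, fun X => ?_⟩
    have h1 := hξ (fun l => X (finProdFinEquiv.symm l).1 (finProdFinEquiv.symm l).2)
    have h2 : (Matrix.of fun a b =>
        X (finProdFinEquiv.symm (finProdFinEquiv (a, b))).1
          (finProdFinEquiv.symm (finProdFinEquiv (a, b))).2) = X := by
      ext a b
      simp
    rw [h2] at h1
    exact h1
  have hnice : ∀ (c : Fin r) (d : Fin (p' + 1)), Nice (fun X => f X c d) := by
    intro c d
    obtain ⟨m, q, ξ, hξ⟩ := key c d
    refine Nice.congr ?_ hξ
    refine Nice.iSupFin m _ (fun i => ?_)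
    refine Nice.iInfFin q _ (fun j => ?_)
    exact Nice.evalPoly (ξ i j)
      (fun l X => X (finProdFinEquiv.symm l).1 (finProdFinEquiv.symm l).2)
      (fun l => Nice.coord _ _)
  -- track all entries
  have hT := trackedSet_range (r * (p' + 1))
    (fun I X => f X (finProdFinEquiv.symm I).1 (finProdFinEquiv.symm I).2)
    (fun I => hnice _ _)
  obtain ⟨s, F, hF, hco, htr⟩ := hT
  have hm : ∀ I : Fin (r * (p' + 1)), ∃ l : Fin s, ∀ X, F X l 0
      = f X (finProdFinEquiv.symm I).1 (finProdFinEquiv.symm I).2 :=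
    fun I => htr _ ⟨I, rfl⟩
  choose ℓ hℓ using hm
  -- final routing block
  set R := affineFun (n := s) (r := r) (p := p' + 1)
    (fun c d a b => if a = ℓ (finProdFinEquiv (c, d)) ∧ b = 0 then 1 else 0) 0 with hR
  have hfeq : f = R ∘ F := by
    funext X
    ext c d
    rw [Function.comp_apply, hR, affineFun_apply]
    simp only [Matrix.zero_apply, add_zero]
    rw [Finset.sum_congr rfl (fun a _ => by
      rw [show (∑ b, (if a = ℓ (finProdFinEquiv (c, d)) ∧ b = 0 then (1:ℝ) else 0) * F X a b)
          = if a = ℓ (finProdFinEquiv (c, d)) then F X a 0 else 0 from by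
        rw [Finset.sum_congr rfl (fun b _ => by
          rw [show ((if a = ℓ (finProdFinEquiv (c, d)) ∧ b = 0 then (1:ℝ) else 0) * F X a b)
              = if b = 0 then (if a = ℓ (finProdFinEquiv (c, d)) then F X a 0 else 0) else 0
            from by
            by_cases h1 : a = ℓ (finProdFinEquiv (c, d)) <;> by_cases h2 : b = (0 : Fin (p' + 1)) <;>
              simp [h1, h2] <;> rw [h2]]), Finset.sum_ite_eq' Finset.univ (0 : Fin (p' + 1))]
        simp]), Finset.sum_ite_eq' Finset.univ (ℓ (finProdFinEquiv (c, d)))]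
    simp only [Finset.mem_univ, if_true]
    have := hℓ (finProdFinEquiv (c, d)) X
    rw [this]
    simp
  obtain ⟨t0, ht0⟩ := hF
  obtain ⟨v, hv⟩ := isEncoder1_comp ht0 (.block R (isEncoderBlock_affine _ _))
  rw [hfeq]
  exact ⟨v, hv⟩
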